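/- The Hadamard gate H, CNOT gates, Pauli corrections, and computational-basis measurement of the teleportation circuit satisfy: for the operator E defined by E = ⟨0|_q ⟨0|_r H_q CNOT_{q,r} CNOT_{p,q} H_p, for all qubit states |α⟩ and all i, j ∈ {0,1}: E(|i⟩_p |j⟩_q X^j Z^i |α⟩_r) = (1/2)|α⟩_p, where X, Z are the Pauli matrices. -/
import Mathlib


open Matrix

noncomputable section

abbrev Q3 := Fin 2 × Fin 2 × Fin 2

def Hgate : Matrix (Fin 2) (Fin 2) ℂ :=
  (Real.sqrt 2 : ℂ)⁻¹ • !![1, 1; 1, -1]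

def Xgate : Matrix (Fin 2) (Fin 2) ℂ := !![0, 1; 1, 0]

def Zgate : Matrix (Fin 2) (Fin 2) ℂ := !![1, 0; 0, -1]

/-- Hadamard on register p of (p,q,r). -/
def Hp : Matrix Q3 Q3 ℂ :=
  Matrix.of fun a b => (if a.2 = b.2 then 1 else 0) * Hgate a.1 b.1

/-- Hadamard on register q of (p,q,r). -/
def Hq : Matrix Q3 Q3 ℂ :=
  Matrix.of fun a b =>
    (if a.1 = b.1 ∧ a.2.2 = b.2.2 then 1 else 0) * Hgate a.2.1 b.2.1

/-- CNOT with control p, target q: |i,j,k⟩ ↦ |i, i⊕j, k⟩. -/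
def CNOTpq : Matrix Q3 Q3 ℂ :=
  Matrix.of fun a b =>
    if a.1 = b.1 ∧ a.2.1 = b.1 + b.2.1 ∧ a.2.2 = b.2.2 then 1 else 0

/-- CNOT with control q, target r: |i,j,k⟩ ↦ |i, j, j⊕k⟩. -/
def CNOTqr : Matrix Q3 Q3 ℂ :=
  Matrix.of fun a b =>
    if a.1 = b.1 ∧ a.2.1 = b.2.1 ∧ a.2.2 = b.2.1 + b.2.2 then 1 else 0

/-- E = ⟨0|_q ⟨0|_r H_q CNOT_{q,r} CNOT_{p,q} H_p. -/
def Etele : Matrix (Fin 2) Q3 ℂ :=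
  Matrix.of fun a c => (Hq * CNOTqr * CNOTpq * Hp) (a, 0, 0) c

lemma sqrt2_inv_sq : ((Real.sqrt 2 : ℝ) : ℂ)⁻¹ * ((Real.sqrt 2 : ℝ) : ℂ)⁻¹ = 1/2 := by
  rw [← mul_inv, ← Complex.ofReal_mul, Real.mul_self_sqrt (by norm_num)]
  norm_num

def Etele' : Matrix (Fin 2) Q3 ℂ :=
  Matrix.of fun a c =>
    (if (c.2.1 = a ∧ c.2.2 = 0) ∨ (c.2.1 = a + 1 ∧ c.2.2 = 1) then 1 else 0) *
      (if a = 1 ∧ c.1 = 1 then -(1/2 : ℂ) else (1/2 : ℂ))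

set_option maxHeartbeats 1000000 in
lemma Etele_eq : Etele = Etele' := by
  funext a c
  fin_cases a <;> fin_cases c <;>
    simp [Etele, Etele', Hq, Hp, CNOTpq, CNOTqr, Hgate, Matrix.mul_apply,
      Fintype.sum_prod_type, Fin.sum_univ_two] <;>
    (rw [sqrt2_inv_sq]; norm_num)

/-- Teleportation identity: for every qubit state |α⟩ and i, j ∈ {0,1},
E (|i⟩_p |j⟩_q X^j Z^i |α⟩_r) = (1/2)|α⟩_p. -/
theorem teleportation_identity (α : Fin 2 → ℂ)
    (hα : ∑ k, star (α k) * α k = 1) (i j : Fin 2) :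
    Etele *ᵥ (fun a : Q3 =>
        (if a.1 = i then 1 else 0) * (if a.2.1 = j then 1 else 0) *
          ((Xgate ^ (j : ℕ) * Zgate ^ (i : ℕ)) *ᵥ α) a.2.2)
      = (1 / 2 : ℂ) • α := by
  funext a
  rw [Etele_eq]
  fin_cases i <;> fin_cases j <;> fin_cases a <;>
    simp [Etele', mulVec, dotProduct, Fintype.sum_prod_type, Fin.sum_univ_two,
      Xgate, Zgate, pow_succ] <;> ring
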